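/- If the directed graph 𝒢_g is strongly connected, then G_g is chaotic according to Devaney on (X, d): it is topologically transitive, its periodic points are dense, and it has sensitive dependence on initial conditions. -/
import Mathlib


def hamB {N : ℕ} (x y : Fin N → Bool) : ℕ :=
  (Finset.univ.filter fun i => x i ≠ y i).card

noncomputable def dE {N : ℕ} (x y : Fin N → Bool) : ℝ := hamB x y

noncomputable def dM {N : ℕ} (m m' : ℕ → Fin N → Bool) : ℝ :=
  (9 / (N : ℝ)) * ∑' k : ℕ, (hamB (m k) (m' k) : ℝ) / 10 ^ (k + 1)

noncomputable def dX {N : ℕ} (p q : (Fin N → Bool) × (ℕ → Fin N → Bool)) : ℝ :=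
  dE p.1 q.1 + dM p.2 q.2

def Gmap {N : ℕ} (g : (Fin N → Bool) → (Fin N → Bool) → (Fin N → Bool))
    (p : (Fin N → Bool) × (ℕ → Fin N → Bool)) : (Fin N → Bool) × (ℕ → Fin N → Bool) :=
  (g (p.2 0) p.1, fun k => p.2 (k + 1))


def pathEnd {N : ℕ} (g : (Fin N → Bool) → (Fin N → Bool) → (Fin N → Bool))
    (x : Fin N → Bool) (L : List (Fin N → Bool)) : Fin N → Bool :=
  L.foldl (fun v m => g m v) x


/-- Open sets of `(X, d)` for the CBC distance. -/
def IsOpenX {N : ℕ} (U : Set ((Fin N → Bool) × (ℕ → Fin N → Bool))) : Prop :=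
  ∀ p ∈ U, ∃ ε > (0 : ℝ), {q | dX p q < ε} ⊆ U

set_option maxHeartbeats 2000000

lemma hamB_self {N : ℕ} (x : Fin N → Bool) : hamB x x = 0 := by
  simp [hamB]

lemma hamB_le {N : ℕ} (x y : Fin N → Bool) : hamB x y ≤ N := by
  classical
  calc hamB x y ≤ Finset.univ.card := Finset.card_filter_le _ _
  _ = N := by simp

lemma hamB_not {N : ℕ} (x : Fin N → Bool) : hamB x (fun i => ! x i) = N := by
  classical
  have : (Finset.univ.filter fun i => x i ≠ ! x i) = Finset.univ := by
    apply Finset.filter_true_of_mem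
    intro i _
    cases x i <;> simp
  simp [hamB, this]

lemma summable_aux {N : ℕ} (m m' : ℕ → Fin N → Bool) :
    Summable (fun k => (hamB (m k) (m' k) : ℝ) / 10 ^ (k + 1)) := by
  have hg : Summable (fun k => (N : ℝ) * (1/10 : ℝ) ^ k) :=
    (summable_geometric_of_lt_one (r := 1/10) (by norm_num) (by norm_num)).mul_left _
  refine Summable.of_nonneg_of_le (fun k => by positivity) (fun k => ?_) hg
  have h1 : (hamB (m k) (m' k) : ℝ) ≤ N := by exact_mod_cast hamB_le _ _
  calc (hamB (m k) (m' k) : ℝ) / 10 ^ (k + 1) ≤ (N : ℝ) / 10 ^ (k+1) := by gcongr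
    _ ≤ (N : ℝ) / 10 ^ k := by
        apply div_le_div_of_nonneg_left (by positivity) (by positivity)
        exact pow_le_pow_right₀ (by norm_num) (by omega)
    _ = (N : ℝ) * (1/10 : ℝ) ^ k := by rw [one_div, inv_pow, div_eq_mul_inv]

lemma dM_nonneg {N : ℕ} (m m' : ℕ → Fin N → Bool) : 0 ≤ dM m m' := by
  unfold dM
  apply mul_nonneg (by positivity)
  exact tsum_nonneg (fun k => by positivity)

lemma dM_le_of_agree {N : ℕ} (hN : 1 ≤ N) (m m' : ℕ → Fin N → Bool) (K : ℕ)
    (h : ∀ k < K, m k = m' k) : dM m m' ≤ (1/10 : ℝ) ^ K := by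
  have hNpos : (0 : ℝ) < N := by exact_mod_cast hN
  have hs : Summable (fun k => (hamB (m k) (m' k) : ℝ) / 10 ^ (k + 1)) := summable_aux m m'
  have hfront : ∑ i ∈ Finset.range K, (hamB (m i) (m' i) : ℝ) / 10 ^ (i + 1) = 0 := by
    apply Finset.sum_eq_zero
    intro i hi
    rw [h i (Finset.mem_range.mp hi), hamB_self]
    simp
  have htsum : ∑' k : ℕ, (hamB (m k) (m' k) : ℝ) / 10 ^ (k + 1)
      = ∑' j : ℕ, (hamB (m (j + K)) (m' (j + K)) : ℝ) / 10 ^ ((j + K) + 1) := by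
    rw [← Summable.sum_add_tsum_nat_add K hs, hfront, zero_add]
  have hs2 : Summable (fun j : ℕ => (hamB (m (j + K)) (m' (j + K)) : ℝ) / 10 ^ ((j + K) + 1)) :=
    (summable_nat_add_iff K).mpr hs
  have hs3 : Summable (fun j : ℕ => ((N : ℝ) * (1/10 : ℝ) ^ (K+1)) * (1/10 : ℝ) ^ j) :=
    (summable_geometric_of_lt_one (r := 1/10) (by norm_num) (by norm_num)).mul_left _
  have hterm : ∀ j : ℕ, (hamB (m (j + K)) (m' (j + K)) : ℝ) / 10 ^ ((j + K) + 1)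
      ≤ ((N : ℝ) * (1/10 : ℝ) ^ (K+1)) * (1/10 : ℝ) ^ j := by
    intro j
    have h1 : (hamB (m (j+K)) (m' (j+K)) : ℝ) ≤ N := by exact_mod_cast hamB_le _ _
    have h2 : (hamB (m (j + K)) (m' (j + K)) : ℝ) / 10 ^ ((j + K) + 1)
        ≤ (N : ℝ) / 10 ^ ((j + K) + 1) := by gcongr
    refine h2.trans (le_of_eq ?_)
    rw [one_div, inv_pow, inv_pow, mul_assoc, ← mul_inv, ← pow_add, ← div_eq_mul_inv]
    congr 2
    ring
  have hbound := Summable.tsum_le_tsum hterm hs2 hs3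
  have hgeo : ∑' j : ℕ, ((N : ℝ) * (1/10 : ℝ) ^ (K+1)) * (1/10 : ℝ) ^ j
      = (N : ℝ) * (1/10 : ℝ) ^ K / 9 := by
    rw [tsum_mul_left, tsum_geometric_of_lt_one (r := 1/10) (by norm_num) (by norm_num), pow_succ]
    norm_num
    ring
  unfold dM
  rw [htsum]
  calc 9 / (N:ℝ) * ∑' j : ℕ, (hamB (m (j + K)) (m' (j + K)) : ℝ) / 10 ^ ((j + K) + 1)
      ≤ 9 / (N:ℝ) * ((N : ℝ) * (1/10 : ℝ) ^ K / 9) := by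
        apply mul_le_mul_of_nonneg_left (hbound.trans hgeo.le) (by positivity)
    _ = (1/10 : ℝ) ^ K := by field_simp

lemma dM_lower {N : ℕ} (m m' : ℕ → Fin N → Bool) :
    9 / (N:ℝ) * ((hamB (m 0) (m' 0) : ℝ) / 10) ≤ dM m m' := by
  have hs := summable_aux m m'
  have h0 := Summable.le_tsum hs 0 (fun j _ => by positivity)
  unfold dM
  apply mul_le_mul_of_nonneg_left _ (by positivity)
  simpa using h0

lemma pathEnd_append {N : ℕ} (g : (Fin N → Bool) → (Fin N → Bool) → (Fin N → Bool))
    (x : Fin N → Bool) (L1 L2 : List (Fin N → Bool)) :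
    pathEnd g x (L1 ++ L2) = pathEnd g (pathEnd g x L1) L2 := by
  simp [pathEnd, List.foldl_append]

lemma Gmap_iterate {N : ℕ} (g : (Fin N → Bool) → (Fin N → Bool) → (Fin N → Bool))
    (n : ℕ) (x : Fin N → Bool) (m : ℕ → Fin N → Bool) :
    (Gmap g)^[n] (x, m) = (pathEnd g x (List.ofFn fun i : Fin n => m i), fun j => m (j + n)) := by
  induction n generalizing x m with
  | zero => simp [pathEnd]
  | succ n ih =>
    rw [Function.iterate_succ_apply]
    show (Gmap g)^[n] (g (m 0) x, fun k => m (k + 1)) = _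
    rw [ih]
    refine Prod.ext ?_ ?_
    · show pathEnd g (g (m 0) x) (List.ofFn fun i : Fin n => m (i + 1))
        = pathEnd g x (List.ofFn fun i : Fin (n+1) => m i)
      rw [List.ofFn_succ]
      simp [pathEnd, Fin.val_succ]
    · funext j
      show m (j + n + 1) = m (j + (n + 1))
      congr 1

lemma dX_same_fst {N : ℕ} (x : Fin N → Bool) (m m' : ℕ → Fin N → Bool) :
    dX (x, m) (x, m') = dM m m' := by
  simp [dX, dE, hamB_self]

lemma exists_K {ε : ℝ} (hε : 0 < ε) : ∃ K : ℕ, 1 ≤ K ∧ (1/10 : ℝ)^K < ε := by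
  obtain ⟨K0, hK0⟩ := exists_pow_lt_of_lt_one hε (by norm_num : (1/10:ℝ) < 1)
  refine ⟨K0 + 1, by omega, lt_of_le_of_lt ?_ hK0⟩
  apply pow_le_pow_of_le_one (by norm_num) (by norm_num)
  omega

/-- if `𝒢_g` is strongly connected then `G_g` is Devaney chaotic on `(X,d)`:
topologically transitive, dense periodic points, and sensitive dependence. -/
theorem devaney_chaotic_of_strongly_connected (N : ℕ) (hN : 1 ≤ N)
    (g : (Fin N → Bool) → (Fin N → Bool) → (Fin N → Bool))
    (hsc : ∀ x y : Fin N → Bool, ∃ L : List (Fin N → Bool), pathEnd g x L = y) :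
    (∀ U V : Set ((Fin N → Bool) × (ℕ → Fin N → Bool)),
       IsOpenX U → IsOpenX V → U.Nonempty → V.Nonempty →
       ∃ k > 0, ((Gmap g)^[k] '' U ∩ V).Nonempty) ∧
    (∀ p : (Fin N → Bool) × (ℕ → Fin N → Bool), ∀ ε > (0 : ℝ),
       ∃ q, dX p q < ε ∧ ∃ n ≥ 1, (Gmap g)^[n] q = q) ∧
    (∃ δ > (0 : ℝ), ∀ p : (Fin N → Bool) × (ℕ → Fin N → Bool), ∀ ε > (0 : ℝ),
       ∃ q, dX p q < ε ∧ ∃ n : ℕ, δ < dX ((Gmap g)^[n] p) ((Gmap g)^[n] q)) := by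
  classical
  refine ⟨?_, ?_, ?_⟩
  · -- transitivity
    rintro U V hU _hV ⟨⟨x, m⟩, hp⟩ ⟨⟨y, m'⟩, hp'⟩
    obtain ⟨ε, hε, hball⟩ := hU _ hp
    obtain ⟨K, hK1, hKlt⟩ := exists_K hε
    obtain ⟨L, hL⟩ := hsc (pathEnd g x (List.ofFn fun i : Fin K => m i)) y
    set n := K + L.length with hn
    set mq : ℕ → Fin N → Bool := fun k =>
      if h : k < K then m k
      else if h2 : k - K < L.length then L.get ⟨k - K, h2⟩
      else m' (k - n) with hmq
    have hagree : ∀ k < K, m k = mq k := by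
      intro k hk; simp only [hmq]; rw [dif_pos hk]
    have hqU : (x, mq) ∈ U := by
      apply hball
      show dX (x, m) (x, mq) < ε
      rw [dX_same_fst]
      exact lt_of_le_of_lt (dM_le_of_agree hN m mq K hagree) hKlt
    have hofn : (List.ofFn fun i : Fin n => mq i) = (List.ofFn fun i : Fin K => m i) ++ L := by
      apply List.ext_getElem
      · simp [hn]
      · intro i h1 h2
        rw [List.getElem_ofFn, List.getElem_append]
        have h1' : i < n := by simpa using h1
        simp only [List.length_ofFn]
        split_ifs with hiK
        · rw [List.getElem_ofFn]
          simp only [hmq]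
          rw [dif_pos hiK]
        · have hi2 : i - K < L.length := by omega
          simp only [hmq]
          rw [dif_neg hiK, dif_pos hi2]
          simp [List.get_eq_getElem]
    have hiter : (Gmap g)^[n] (x, mq) = (y, m') := by
      rw [Gmap_iterate]
      refine Prod.ext ?_ ?_
      · show pathEnd g x (List.ofFn fun i : Fin n => mq i) = y
        rw [hofn, pathEnd_append, hL]
      · funext j
        show mq (j + n) = m' j
        simp only [hmq]
        have hjn : j + n - n = j := by omega
        rw [dif_neg (by omega), dif_neg (by omega), hjn]
    exact ⟨n, by omega, ⟨(y, m'), ⟨(x, mq), hqU, hiter⟩, hp'⟩⟩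
  · -- dense periodic points
    rintro ⟨x, m⟩ ε hε
    obtain ⟨K, hK1, hKlt⟩ := exists_K hε
    obtain ⟨L, hL⟩ := hsc (pathEnd g x (List.ofFn fun i : Fin K => m i)) x
    set A := (List.ofFn fun i : Fin K => m i) ++ L with hA
    have hAlen : A.length = K + L.length := by simp [hA]
    have hnpos : 0 < A.length := by omega
    set n := A.length with hn
    set mq : ℕ → Fin N → Bool := fun k => A[k % n]'(Nat.mod_lt _ hnpos) with hmq
    have hagree : ∀ k < K, m k = mq k := by
      intro k hk
      have hkn : k < n := by omega
      have hmod : k % n = k := Nat.mod_eq_of_lt hkn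
      have h2 : mq k = A[k]'(hkn) := by
        simp only [hmq]
        congr 1
      rw [h2]
      simp only [hA, List.getElem_append, List.length_ofFn]
      rw [dif_pos hk, List.getElem_ofFn]
    have hofn : (List.ofFn fun i : Fin n => mq i) = A := by
      apply List.ext_getElem
      · simp [hn]
      · intro i h1 h2
        rw [List.getElem_ofFn]
        simp only [hmq]
        congr 1
        exact Nat.mod_eq_of_lt (by simpa using h2)
    have hiter : (Gmap g)^[n] (x, mq) = (x, mq) := by
      rw [Gmap_iterate]
      refine Prod.ext ?_ ?_
      · show pathEnd g x (List.ofFn fun i : Fin n => mq i) = x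
        rw [hofn, hA, pathEnd_append, hL]
      · funext j
        show mq (j + n) = mq j
        simp only [hmq]
        have hmod : (j + n) % n = j % n := Nat.add_mod_right j n
        congr 1
    refine ⟨(x, mq), ?_, n, by omega, hiter⟩
    rw [dX_same_fst]
    exact lt_of_le_of_lt (dM_le_of_agree hN m mq K hagree) hKlt
  · -- sensitivity
    refine ⟨1/2, by norm_num, ?_⟩
    rintro ⟨x, m⟩ ε hε
    obtain ⟨K, _hK1, hKlt⟩ := exists_K hε
    set mq : ℕ → Fin N → Bool := fun k => if k = K then (fun i => ! m K i) else m k with hmq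
    have hagree : ∀ k < K, m k = mq k := by
      intro k hk; simp only [hmq]; rw [if_neg (by omega)]
    refine ⟨(x, mq), ?_, K, ?_⟩
    · rw [dX_same_fst]
      exact lt_of_le_of_lt (dM_le_of_agree hN m mq K hagree) hKlt
    · rw [Gmap_iterate, Gmap_iterate]
      have hofn : (List.ofFn fun i : Fin K => mq i) = (List.ofFn fun i : Fin K => m i) := by
        congr 1
        funext i
        simp only [hmq]
        have hne : (i : ℕ) ≠ K := by omega
        rw [if_neg hne]
      rw [hofn, dX_same_fst]
      have hlow := dM_lower (fun j => m (j + K)) (fun j => mq (j + K))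
      simp only [Nat.zero_add] at hlow
      have hmqK : mq K = fun i => ! m K i := by
        simp [hmq]
      rw [hmqK, hamB_not] at hlow
      have hNpos : (0:ℝ) < N := by exact_mod_cast hN
      have heq : (9 / (N:ℝ)) * ((N:ℝ) / 10) = 9 / 10 := by field_simp
      rw [heq] at hlow
      linarith
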